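/- For p > 0, the function F(z) = z^{p+1} · K_0(2√z) · ₁F₂(1; p+1, p+2; z)/(p+1) + z^{p+3/2} · K_1(2√z) · ₁F₂(1; p+2, p+2; z)/(p+1)² is an antiderivative of z ↦ z^p · K_0(2√z) on (0, ∞). -/

import Mathlib

open Real MeasureTheory Filter Set

/-- Modified Bessel function of the second kind of order `t`. -/
noncomputable def besselK (t x : ℝ) : ℝ :=
  ∫ u in Set.Ioi (0 : ℝ), Real.exp (-x * Real.cosh u) * Real.cosh (t * u)

/-- Generalized hypergeometric function `₁F₂(1; a, b; z)`. -/
noncomputable def oneF2 (a b z : ℝ) : ℝ :=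
  ∑' j : ℕ, z ^ j * (Real.Gamma a * Real.Gamma b) /
    (Real.Gamma (a + j) * Real.Gamma (b + j))

/-!
Write `k₀ = K₀(2√z)`, `k₁ = √z K₁(2√z)`, `G = z^(p+1) ₁F₂(1; p+1, p+2; z)` and
`H = z^(p+1) ₁F₂(1; p+2, p+2; z)`, so that the function is `G k₀ / (p+1) + H k₁ / (p+1)²`.
Differentiating `K_t(x) = ∫ e^(-x cosh u) cosh (t u) du` under the integral sign, together with
one integration by parts, gives `K₀' = -K₁` and `K₁' = -K₀ - K₁/x`, hence `k₀' = -k₁/z` and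
`k₁' = -k₀`. On the hypergeometric side, the Euler operator `a + z d/dz` maps
`₁F₂(1; a+1, b; z)` to `a ₁F₂(1; a, b; z)`, and `₁F₂(1; a, a; z) = 1 + z ₁F₂(1; a+1, a+1; z) / a²`;
with the symmetry of `₁F₂` in its parameters these give `G' = (p+1) z^p + H/(p+1)` and
`H' = (p+1) G/z`. In the derivative of the sum the `k₁` terms
cancel and the `k₀` terms leave `z^p k₀`.
-/

open Topology

lemma cosh_le_exp_abs (v : ℝ) : cosh v ≤ exp |v| := by
  rw [← cosh_abs, cosh_eq]
  linarith [exp_le_exp.2 (neg_le_self (abs_nonneg v))]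

lemma one_add_sq_div_two_le_cosh (u : ℝ) : 1 + u ^ 2 / 2 ≤ cosh u := by
  have h := sum_le_hasSum (Finset.range 2)
    (fun n _ => div_nonneg (by rw [pow_mul]; positivity) (by positivity)) (hasSum_cosh u)
  simpa [Finset.sum_range_succ] using h

lemma exp_mul_sub_mul_cosh_le (a : ℝ) {c : ℝ} (hc : 0 < c) (u : ℝ) :
    exp (a * u - c * cosh u) ≤ exp ((a + 1) ^ 2 / (2 * c) - c) * exp (-u) := by
  rw [← exp_add, exp_le_exp]
  have hcosh := mul_le_mul_of_nonneg_left (one_add_sq_div_two_le_cosh u) hc.le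
  -- AM-GM: `(a + 1) u ≤ (a + 1)² / (2c) + c u² / 2`
  have hsq : 0 ≤ (c * u - (a + 1)) ^ 2 / (2 * c) := by positivity
  have hexp : (c * u - (a + 1)) ^ 2 / (2 * c)
      = c * u ^ 2 / 2 - (a + 1) * u + (a + 1) ^ 2 / (2 * c) := by
    field_simp; ring
  nlinarith

lemma integrableOn_exp_mul_sub_mul_cosh (a : ℝ) {c : ℝ} (hc : 0 < c) :
    IntegrableOn (fun u => exp (a * u - c * cosh u)) (Ioi 0) := by
  refine ((exp_neg_integrableOn_Ioi 0 one_pos).const_mul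
    (exp ((a + 1) ^ 2 / (2 * c) - c))).mono' (by fun_prop : Continuous _).aestronglyMeasurable
    (ae_of_all _ fun u => ?_)
  rw [norm_of_nonneg (exp_pos _).le, neg_one_mul]
  exact exp_mul_sub_mul_cosh_le a hc u

lemma cosh_pow_mul_exp_mul_cosh_le (k : ℕ) (t : ℝ) {c y u : ℝ} (hcy : c ≤ y) (hu : 0 ≤ u) :
    cosh u ^ k * (exp (-y * cosh u) * cosh (t * u)) ≤ exp ((k + |t|) * u - c * cosh u) := by
  calc cosh u ^ k * (exp (-y * cosh u) * cosh (t * u))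
      ≤ exp u ^ k * (exp (-c * cosh u) * exp (|t| * u)) := by
        gcongr
        · simpa [abs_of_nonneg hu] using cosh_le_exp_abs u
        · simpa [abs_mul, abs_of_nonneg hu] using cosh_le_exp_abs (t * u)
    _ = exp ((k + |t|) * u - c * cosh u) := by
        rw [← exp_nat_mul, ← exp_add, ← exp_add]; ring_nf

lemma integrableOn_cosh_pow_mul_exp_mul_cosh (k : ℕ) (t : ℝ) {x : ℝ} (hx : 0 < x) :
    IntegrableOn (fun u => cosh u ^ k * (exp (-x * cosh u) * cosh (t * u))) (Ioi 0) :=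
  (integrableOn_exp_mul_sub_mul_cosh (k + |t|) hx).mono'
    (by fun_prop : Continuous _).aestronglyMeasurable <|
    (ae_restrict_iff' measurableSet_Ioi).2 <| ae_of_all _ fun u hu => by
      rw [norm_of_nonneg (by positivity)]
      exact cosh_pow_mul_exp_mul_cosh_le k t le_rfl (le_of_lt hu)

theorem hasDerivAt_besselK (t : ℝ) {x : ℝ} (hx : 0 < x) :
    HasDerivAt (besselK t) (-∫ u in Ioi 0, cosh u * (exp (-x * cosh u) * cosh (t * u))) x := by
  have h := hasDerivAt_integral_of_dominated_loc_of_deriv_le (μ := volume.restrict (Ioi 0))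
    (F := fun y u => exp (-y * cosh u) * cosh (t * u))
    (F' := fun y u => -(cosh u * (exp (-y * cosh u) * cosh (t * u))))
    (bound := fun u => exp ((1 + |t|) * u - x / 2 * cosh u))
    (Metric.ball_mem_nhds x (half_pos hx))
    (Eventually.of_forall fun y => (by fun_prop : Continuous _).aestronglyMeasurable)
    (by simpa only [pow_zero, one_mul, IntegrableOn] using
      integrableOn_cosh_pow_mul_exp_mul_cosh 0 t hx)
    (by fun_prop : Continuous _).aestronglyMeasurable
    ((ae_restrict_iff' measurableSet_Ioi).2 <| ae_of_all _ fun u hu y hy => ?_)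
    (integrableOn_exp_mul_sub_mul_cosh _ (half_pos hx))
    (ae_of_all _ fun u y _ => ?_)
  · rw [← integral_neg]; exact h.2
  · have hy' : x / 2 ≤ y := by
      have := (abs_lt.1 (mem_ball_iff_norm.1 hy)).1; linarith
    rw [norm_neg, norm_of_nonneg (by positivity)]
    simpa using cosh_pow_mul_exp_mul_cosh_le 1 t hy' (le_of_lt hu)
  · have h' : HasDerivAt (fun y => -y * cosh u) (-cosh u) y := by
      simpa using (hasDerivAt_neg y).mul_const (cosh u)
    exact (h'.exp.mul_const _).congr_deriv (by ring)

lemma besselK_zero_eq (x : ℝ) : besselK 0 x = ∫ u in Ioi 0, exp (-x * cosh u) := by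
  simp [besselK]

lemma besselK_one_eq (x : ℝ) : besselK 1 x = ∫ u in Ioi 0, cosh u * exp (-x * cosh u) := by
  simp [besselK, mul_comm]

theorem hasDerivAt_besselK_zero {x : ℝ} (hx : 0 < x) :
    HasDerivAt (besselK 0) (-besselK 1 x) x := by
  convert hasDerivAt_besselK 0 hx using 2
  simp [besselK_one_eq]

lemma tendsto_sinh_mul_exp_neg_mul_cosh_atTop {x : ℝ} (hx : 0 < x) :
    Tendsto (fun u => sinh u * exp (-x * cosh u)) atTop (𝓝 0) := by
  have hcosh : Tendsto cosh atTop atTop :=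
    tendsto_atTop_mono (fun u => show u ≤ cosh u by nlinarith [one_add_sq_div_two_le_cosh u])
      tendsto_id
  have h := ((tendsto_pow_mul_exp_neg_atTop_nhds_zero 1).comp
    (hcosh.const_mul_atTop hx)).const_mul x⁻¹
  rw [mul_zero] at h
  refine tendsto_of_tendsto_of_tendsto_of_le_of_le' tendsto_const_nhds h ?_ ?_
  · filter_upwards [eventually_ge_atTop 0] with u hu
    exact mul_nonneg (sinh_nonneg_iff.2 hu) (exp_pos _).le
  · filter_upwards with u
    simp only [Function.comp, pow_one, ← mul_assoc, inv_mul_cancel_left₀ hx.ne', neg_mul]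
    exact mul_le_mul_of_nonneg_right (sinh_lt_cosh u).le (exp_pos _).le

lemma integral_cosh_sq_mul_exp_neg_mul_cosh {x : ℝ} (hx : 0 < x) :
    ∫ u in Ioi 0, cosh u ^ 2 * exp (-x * cosh u) = besselK 0 x + besselK 1 x / x := by
  have i0 : IntegrableOn (fun u => exp (-x * cosh u)) (Ioi 0) := by
    simpa using integrableOn_cosh_pow_mul_exp_mul_cosh 0 0 hx
  have i1 : IntegrableOn (fun u => cosh u * exp (-x * cosh u)) (Ioi 0) := by
    simpa using integrableOn_cosh_pow_mul_exp_mul_cosh 1 0 hx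
  have i2 : IntegrableOn (fun u => cosh u ^ 2 * exp (-x * cosh u)) (Ioi 0) := by
    simpa using integrableOn_cosh_pow_mul_exp_mul_cosh 2 0 hx
  have hderiv : ∀ u ∈ Ici (0 : ℝ), HasDerivAt (fun u => sinh u * exp (-x * cosh u))
      (cosh u * exp (-x * cosh u) + x * exp (-x * cosh u)
        - x * (cosh u ^ 2 * exp (-x * cosh u))) u := by
    intro u _
    have h := (hasDerivAt_cosh u).const_mul (-x)
    refine ((hasDerivAt_sinh u).mul h.exp).congr_deriv ?_
    linear_combination x * exp (-x * cosh u) * cosh_sq_sub_sinh_sq u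
  have key := integral_Ioi_of_hasDerivAt_of_tendsto' hderiv
    ((i1.add (i0.const_mul x)).sub (i2.const_mul x)) (tendsto_sinh_mul_exp_neg_mul_cosh_atTop hx)
  rw [integral_sub, integral_add, integral_const_mul, integral_const_mul, sinh_zero, zero_mul,
    sub_zero] at key
  rw [besselK_zero_eq, besselK_one_eq]
  · apply mul_left_cancel₀ hx.ne'
    rw [mul_add, mul_div_cancel₀ _ hx.ne']
    linarith
  exacts [i1, i0.const_mul x, i1.add (i0.const_mul x), i2.const_mul x]

theorem hasDerivAt_besselK_one {x : ℝ} (hx : 0 < x) :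
    HasDerivAt (besselK 1) (-(besselK 0 x + besselK 1 x / x)) x := by
  convert hasDerivAt_besselK 1 hx using 2
  rw [← integral_cosh_sq_mul_exp_neg_mul_cosh hx]
  congr 1 with u
  ring_nf

lemma hasDerivAt_besselK_zero_two_mul_sqrt {z : ℝ} (hz : 0 < z) :
    HasDerivAt (fun y => besselK 0 (2 * √y)) (-(√z * besselK 1 (2 * √z)) / z) z := by
  have hs : 0 < √z := sqrt_pos.2 hz
  refine ((hasDerivAt_besselK_zero (by positivity : 0 < 2 * √z)).comp z
    ((hasDerivAt_sqrt hz.ne').const_mul 2)).congr_deriv ?_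
  field_simp
  rw [sq_sqrt hz.le, mul_comm]

lemma hasDerivAt_sqrt_mul_besselK_one_two_mul_sqrt {z : ℝ} (hz : 0 < z) :
    HasDerivAt (fun y => √y * besselK 1 (2 * √y)) (-besselK 0 (2 * √z)) z := by
  have hs : 0 < √z := sqrt_pos.2 hz
  have hsqrt := hasDerivAt_sqrt hz.ne'
  refine (hsqrt.mul ((hasDerivAt_besselK_one (by positivity : 0 < 2 * √z)).comp z
    (hsqrt.const_mul 2))).congr_deriv ?_
  simp only [Function.comp]
  field_simp
  ring

section EntirePowerSeries

variable {c : ℕ → ℝ}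

lemma summable_mul_pow_of_forall_summable (hc : ∀ r, Summable fun j => ‖c j‖ * r ^ j)
    (z : ℝ) :
    Summable fun j => c j * z ^ j :=
  (hc |z|).of_norm_bounded fun j => by rw [norm_mul, norm_pow, norm_eq_abs z]

lemma summable_natCast_mul_mul_pow_of_forall_summable
    (hc : ∀ r, Summable fun j => ‖c j‖ * r ^ j) (z : ℝ) :
    Summable fun j : ℕ => (j : ℝ) * c j * z ^ j := by
  refine (hc (2 * |z|)).of_norm_bounded fun j => ?_
  rw [norm_mul, norm_mul, norm_pow, mul_pow, Real.norm_natCast, norm_eq_abs z]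
  have : (j : ℝ) ≤ 2 ^ j := by exact_mod_cast (Nat.lt_two_pow_self).le
  calc (j : ℝ) * ‖c j‖ * |z| ^ j = ‖c j‖ * (j * |z| ^ j) := by ring
    _ ≤ ‖c j‖ * (2 ^ j * |z| ^ j) := by gcongr

theorem hasDerivAt_tsum_mul_pow (hc : ∀ r, Summable fun j => ‖c j‖ * r ^ j) (z : ℝ) :
    HasDerivAt (fun y => ∑' j, c j * y ^ j) (∑' j : ℕ, (j : ℝ) * c j * z ^ (j - 1)) z := by
  set R := |z| + 1
  have hzR : z ∈ Ioo (-R) R := ⟨by linarith [neg_abs_le z], by linarith [le_abs_self z]⟩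
  refine hasDerivAt_tsum_of_isPreconnected (g := fun j y => c j * y ^ j)
    (g' := fun j y => (j : ℝ) * c j * y ^ (j - 1)) (hc (2 * R)) isOpen_Ioo isPreconnected_Ioo
    (fun j y _ => ?_) (fun j y hy => ?_) hzR (summable_mul_pow_of_forall_summable hc z) hzR
  · exact ((hasDerivAt_pow j y).const_mul (c j)).congr_deriv (by ring)
  · have hyR : |y| ≤ R := abs_le.2 ⟨hy.1.le, hy.2.le⟩
    have hj : (j : ℝ) ≤ 2 ^ j := by exact_mod_cast (Nat.lt_two_pow_self).le
    have hR : |y| ^ (j - 1) ≤ R ^ j :=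
      (pow_le_pow_left₀ (abs_nonneg y) hyR _).trans
        (pow_le_pow_right₀ (by linarith [abs_nonneg z]) (Nat.sub_le j 1))
    rw [norm_mul, norm_mul, norm_pow, Real.norm_natCast, norm_eq_abs y, mul_pow]
    calc (j : ℝ) * ‖c j‖ * |y| ^ (j - 1) = ‖c j‖ * (j * |y| ^ (j - 1)) := by ring
      _ ≤ ‖c j‖ * (2 ^ j * R ^ j) := by gcongr

lemma mul_tsum_natCast_mul_mul_pow_sub_one (z : ℝ) :
    z * ∑' j : ℕ, (j : ℝ) * c j * z ^ (j - 1) = ∑' j : ℕ, (j : ℝ) * c j * z ^ j := by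
  rw [← tsum_mul_left]
  refine tsum_congr fun j => ?_
  rcases j with _ | j
  · simp
  · rw [Nat.add_sub_cancel, pow_succ]; ring

end EntirePowerSeries

noncomputable def oneF2Coeff (a b : ℝ) (j : ℕ) : ℝ :=
  Gamma a * Gamma b / (Gamma (a + j) * Gamma (b + j))

section OneF2

variable {a b : ℝ}

lemma oneF2_eq_tsum (a b z : ℝ) : oneF2 a b z = ∑' j, oneF2Coeff a b j * z ^ j :=
  tsum_congr fun j => by rw [oneF2Coeff]; ring

lemma oneF2_comm (a b z : ℝ) : oneF2 a b z = oneF2 b a z :=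
  tsum_congr fun j => by ring

lemma Gamma_add_natCast_succ (ha : 0 < a) (j : ℕ) :
    Gamma (a + (j + 1 : ℕ)) = (a + j) * Gamma (a + j) := by
  rw [Nat.cast_succ, ← add_assoc, Gamma_add_one (by positivity)]

lemma oneF2Coeff_pos (ha : 0 < a) (hb : 0 < b) (j : ℕ) : 0 < oneF2Coeff a b j := by
  have := Gamma_pos_of_pos ha
  have := Gamma_pos_of_pos hb
  have := Gamma_pos_of_pos (by positivity : 0 < a + j)
  have := Gamma_pos_of_pos (by positivity : 0 < b + j)
  unfold oneF2Coeff
  positivity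

lemma oneF2Coeff_zero (ha : 0 < a) (hb : 0 < b) : oneF2Coeff a b 0 = 1 := by
  simp [oneF2Coeff, (Gamma_pos_of_pos ha).ne', (Gamma_pos_of_pos hb).ne']

lemma oneF2Coeff_succ (ha : 0 < a) (hb : 0 < b) (j : ℕ) :
    oneF2Coeff a b (j + 1) = oneF2Coeff a b j / ((a + j) * (b + j)) := by
  rw [oneF2Coeff, oneF2Coeff, Gamma_add_natCast_succ ha, Gamma_add_natCast_succ hb, div_div]
  congr 1
  ring

lemma oneF2Coeff_succ_eq_div (ha : 0 < a) (hb : 0 < b) (j : ℕ) :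
    oneF2Coeff a b (j + 1) = oneF2Coeff (a + 1) (b + 1) j / (a * b) := by
  have hcast (s : ℝ) : s + 1 + (j : ℝ) = s + (j + 1 : ℕ) := by push_cast; ring
  rw [oneF2Coeff, oneF2Coeff, Gamma_add_one ha.ne', Gamma_add_one hb.ne', hcast, hcast]
  field_simp

lemma add_natCast_mul_oneF2Coeff_add_one (ha : 0 < a) (j : ℕ) :
    (a + j) * oneF2Coeff (a + 1) b j = a * oneF2Coeff a b j := by
  have hcast : a + 1 + (j : ℝ) = a + j + 1 := by ring
  have hj : a + j ≠ 0 := by positivity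
  rw [oneF2Coeff, oneF2Coeff, Gamma_add_one ha.ne', hcast, Gamma_add_one hj, mul_div_assoc',
    mul_assoc (a + j), mul_div_mul_left _ _ hj]
  ring

lemma summable_oneF2Coeff_mul_pow (ha : 0 < a) (hb : 0 < b) (r : ℝ) :
    Summable fun j => ‖oneF2Coeff a b j‖ * r ^ j := by
  refine summable_of_ratio_norm_eventually_le (r := 1 / 2) (by norm_num) ?_
  filter_upwards [(tendsto_natCast_atTop_atTop (R := ℝ)).eventually_ge_atTop (2 * |r| + 1)]
    with j hj
  have hD : 2 * |r| ≤ (a + j) * (b + j) := by nlinarith [abs_nonneg r]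
  have hX : 0 ≤ ‖oneF2Coeff a b j‖ * |r| ^ j := by positivity
  rw [oneF2Coeff_succ ha hb, norm_mul, norm_mul, norm_norm, norm_norm, norm_pow, norm_pow,
    norm_div, norm_of_nonneg (by positivity : 0 ≤ (a + j) * (b + j)), norm_eq_abs r, pow_succ,
    div_mul_eq_mul_div, div_le_iff₀ (by positivity)]
  nlinarith [mul_le_mul_of_nonneg_left hD hX]

theorem hasDerivAt_oneF2 (ha : 0 < a) (hb : 0 < b) (z : ℝ) :
    HasDerivAt (oneF2 a b) (∑' j : ℕ, (j : ℝ) * oneF2Coeff a b j * z ^ (j - 1)) z := by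
  rw [show oneF2 a b = _ from funext (oneF2_eq_tsum a b)]
  exact hasDerivAt_tsum_mul_pow (summable_oneF2Coeff_mul_pow ha hb) z

theorem hasDerivAt_rpow_mul_oneF2_add_one (ha : 0 < a) (hb : 0 < b) {z : ℝ} (hz : 0 < z) :
    HasDerivAt (fun y => y ^ a * oneF2 (a + 1) b y) (a * z ^ (a - 1) * oneF2 a b z) z := by
  have ha1 : 0 < a + 1 := by linarith
  have hc := summable_oneF2Coeff_mul_pow ha1 hb
  have heuler : a * oneF2 (a + 1) b z
      + z * ∑' j : ℕ, (j : ℝ) * oneF2Coeff (a + 1) b j * z ^ (j - 1) = a * oneF2 a b z := by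
    rw [mul_tsum_natCast_mul_mul_pow_sub_one, oneF2_eq_tsum, oneF2_eq_tsum, ← tsum_mul_left,
      ← tsum_mul_left, ← ((summable_mul_pow_of_forall_summable hc z).mul_left a).tsum_add
        (summable_natCast_mul_mul_pow_of_forall_summable hc z)]
    refine tsum_congr fun j => ?_
    linear_combination z ^ j * add_natCast_mul_oneF2Coeff_add_one ha j
  refine ((hasDerivAt_rpow_const (Or.inl hz.ne')).mul (hasDerivAt_oneF2 ha1 hb z)).congr_deriv ?_
  rw [show z ^ a = z ^ (a - 1) * z by rw [rpow_sub_one hz.ne', div_mul_cancel₀ _ hz.ne']]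
  linear_combination z ^ (a - 1) * heuler

lemma oneF2_eq_one_add (ha : 0 < a) (hb : 0 < b) (z : ℝ) :
    oneF2 a b z = 1 + z / (a * b) * oneF2 (a + 1) (b + 1) z := by
  rw [oneF2_eq_tsum, oneF2_eq_tsum, (summable_mul_pow_of_forall_summable
    (summable_oneF2Coeff_mul_pow ha hb) z).tsum_eq_zero_add, oneF2Coeff_zero ha hb,
    ← tsum_mul_left]
  congr 1
  · simp
  · refine tsum_congr fun j => ?_
    rw [oneF2Coeff_succ_eq_div ha hb, pow_succ]
    ring

end OneF2

theorem stmt_1 (p : ℝ) (hp : 0 < p) :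
    ∀ z : ℝ, 0 < z →
      HasDerivAt (fun z : ℝ =>
          z ^ (p + 1) * besselK 0 (2 * Real.sqrt z) * oneF2 (p + 1) (p + 2) z / (p + 1)
          + z ^ (p + 3 / 2) * besselK 1 (2 * Real.sqrt z) * oneF2 (p + 2) (p + 2) z
              / (p + 1) ^ 2)
        (z ^ p * besselK 0 (2 * Real.sqrt z)) z := by
  intro z hz
  have hp1 : 0 < p + 1 := by linarith
  have hp2 : p + 1 + 1 = p + 2 := by ring
  have hG : HasDerivAt (fun y => y ^ (p + 1) * oneF2 (p + 1) (p + 2) y)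
      ((p + 1) * z ^ p * (1 + z / ((p + 1) * (p + 1)) * oneF2 (p + 2) (p + 2) z)) z := by
    have h := hasDerivAt_rpow_mul_oneF2_add_one hp1 hp1 hz
    rwa [oneF2_eq_one_add hp1 hp1, add_sub_cancel_right, hp2,
      funext (oneF2_comm (p + 2) (p + 1))] at h
  have hH : HasDerivAt (fun y => y ^ (p + 1) * oneF2 (p + 2) (p + 2) y)
      ((p + 1) * z ^ p * oneF2 (p + 1) (p + 2) z) z := by
    have h := hasDerivAt_rpow_mul_oneF2_add_one hp1 (by linarith : 0 < p + 2) hz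
    rwa [add_sub_cancel_right, hp2] at h
  have h := ((hG.mul (hasDerivAt_besselK_zero_two_mul_sqrt hz)).div_const (p + 1)).add
    ((hH.mul (hasDerivAt_sqrt_mul_besselK_one_two_mul_sqrt hz)).div_const ((p + 1) ^ 2))
  refine (h.congr_of_eventuallyEq ?_).congr_deriv ?_
  · filter_upwards [lt_mem_nhds hz] with y hy
    rw [show p + 3 / 2 = p + 1 + 1 / 2 by ring, rpow_add hy (p + 1), ← sqrt_eq_rpow]
    simp only [Pi.add_apply, Pi.mul_apply]
    ring
  · rw [rpow_add_one hz.ne']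
    field_simp
    ring
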